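/- arXiv:2009.12184 — 2 statements merged into one kernel-verified Lean document; each statement's English description precedes it below -/
import Mathlib

section
/- Let G be a connected graph and G' its line graph. Then G has a non-trivial connected cut (S, V \ S) with at least k cut edges if and only if G' has a minimal separator of size at least k. -/
open SimpleGraph

universe u

/-- The set of vertices outside `C` having a neighbor in `C`. -/
def nbhd {V : Type u} (G : SimpleGraph V) (C : Set V) : Set V :=
  {v | v ∉ C ∧ ∃ u ∈ C, G.Adj u v}

/-- `C` is a connected component of `G − S`. -/
def IsCompOf {V : Type u} (G : SimpleGraph V) (S C : Set V) : Prop :=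
  C.Nonempty ∧ Disjoint C S ∧ (G.induce C).Connected ∧
    ∀ u ∈ C, ∀ v, G.Adj u v → v ∉ S → v ∈ C

/-- `C` is a full component associated to `S`: a component of `G − S` with `N(C) = S`. -/
def IsFullCompOf {V : Type u} (G : SimpleGraph V) (S C : Set V) : Prop :=
  IsCompOf G S C ∧ nbhd G C = S

/-- `S` is a minimal separator of `G`:
`G − S` has at least two (distinct) full components associated to `S`. -/
def IsMinSep {V : Type u} (G : SimpleGraph V) (S : Set V) : Prop :=
  ∃ C₁ C₂ : Set V, C₁ ≠ C₂ ∧ IsFullCompOf G S C₁ ∧ IsFullCompOf G S C₂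

/-- `(S, Sᶜ)` is a connected cut: both sides induce connected (hence nonempty) subgraphs. -/
def IsConnCut {V : Type u} (G : SimpleGraph V) (S : Set V) : Prop :=
  (G.induce S).Connected ∧ (G.induce Sᶜ).Connected

/-- The size of the cut `(S, Sᶜ)`: the number of edges with one endpoint in `S`
and the other outside `S` (counted as ordered pairs with first coordinate in `S`). -/
noncomputable def cutSize {V : Type u} (G : SimpleGraph V) (S : Set V) : ℕ :=
  {p : V × V | p.1 ∈ S ∧ p.2 ∉ S ∧ G.Adj p.1 p.2}.ncard

/-! A connected cut `(A, Aᶜ)` with both sides of size at least two splits the line graph,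
after removing the crossing edges, into the edges inside `A` and the edges inside `Aᶜ`; both are
full components because every vertex of a connected side of size at least two lies on an edge of
that side.

Conversely, let `C₁ ≠ C₂` be full components of a minimal separator `S` of the line graph and let
`A` be the set of vertices covered by `C₁`. The vertices covered by `C₂` avoid `A`, and every edge
of `S` meets both sets, so `S` consists of crossing edges of `A`. `G[A]` is connected because `C₁`
is. An edge leaving `A` is adjacent to `C₁` but not in it, so it lies in `S`; hence every vertex
outside `A` reaches the (connected) set covered by `C₂` without entering `A`, and `G[Aᶜ]` is
connected. -/

theorem IsCompOf.subset_of_mem {W : Type*} {H : SimpleGraph W} {S C D : Set W}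
    (hC : IsCompOf H S C) (hD : ∀ u ∈ D, ∀ v, H.Adj u v → v ∉ S → v ∈ D) {x : W}
    (hxC : x ∈ C) (hxD : x ∈ D) : C ⊆ D := by
  obtain ⟨-, hCS, hCconn, -⟩ := hC
  suffices h : ∀ y : C, (H.induce C).Reachable ⟨x, hxC⟩ y → ↑y ∈ D from
    fun y hy => h ⟨y, hy⟩ (hCconn.preconnected _ _)
  intro y hxy
  rw [reachable_iff_reflTransGen] at hxy
  induction hxy with
  | refl => exact hxD
  | tail _ hadj ih => exact hD _ ih _ hadj (Set.disjoint_left.mp hCS (Subtype.prop _))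

theorem IsCompOf.eq_of_mem {W : Type*} {H : SimpleGraph W} {S C₁ C₂ : Set W}
    (h₁ : IsCompOf H S C₁) (h₂ : IsCompOf H S C₂) {x : W} (hx₁ : x ∈ C₁) (hx₂ : x ∈ C₂) :
    C₁ = C₂ :=
  (h₁.subset_of_mem h₂.2.2.2 hx₁ hx₂).antisymm (h₂.subset_of_mem h₁.2.2.2 hx₂ hx₁)

theorem IsCompOf.disjoint_of_ne {W : Type*} {H : SimpleGraph W} {S C₁ C₂ : Set W}
    (h₁ : IsCompOf H S C₁) (h₂ : IsCompOf H S C₂) (hne : C₁ ≠ C₂) : Disjoint C₁ C₂ :=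
  Set.disjoint_left.mpr fun _ hx₁ hx₂ => hne (h₁.eq_of_mem h₂ hx₁ hx₂)

namespace SimpleGraph

variable {V : Type*} {G : SimpleGraph V}

theorem exists_reachable_induce_compl {A B : Set V} (hG : G.Preconnected) (hBA : B ⊆ Aᶜ)
    (hA : A.Nonempty) (hbdry : ∀ x y, G.Adj x y → x ∉ A → y ∈ A → x ∈ B) {x : V}
    (hx : x ∉ A) : ∃ b, ∃ hb : b ∈ B, (G.induce Aᶜ).Reachable ⟨x, hx⟩ ⟨b, hBA hb⟩ := by
  obtain ⟨a, ha⟩ := hA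
  obtain ⟨p⟩ := hG x a
  induction p with
  | nil => exact absurd ha hx
  | @cons x z a hxz p ih =>
    by_cases hz : z ∈ A
    · exact ⟨x, hbdry x z hxz hx hz, .rfl⟩
    · obtain ⟨b, hb, hzb⟩ := ih hz ha
      exact ⟨b, hb, (Adj.reachable (show (G.induce Aᶜ).Adj ⟨x, hx⟩ ⟨z, hz⟩ from hxz)).trans hzb⟩

theorem preconnected_induce_compl {A B : Set V} (hG : G.Preconnected) (hBA : B ⊆ Aᶜ)
    (hA : A.Nonempty) (hbdry : ∀ x y, G.Adj x y → x ∉ A → y ∈ A → x ∈ B)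
    (hB : (G.induce B).Preconnected) : (G.induce Aᶜ).Preconnected := by
  rintro ⟨x, hx⟩ ⟨y, hy⟩
  obtain ⟨b, hb, hxb⟩ := exists_reachable_induce_compl hG hBA hA hbdry hx
  obtain ⟨b', hb', hyb'⟩ := exists_reachable_induce_compl hG hBA hA hbdry hy
  exact hxb.trans (((hB ⟨b, hb⟩ ⟨b', hb'⟩).map (induceHomOfLE G hBA).toHom).trans hyb'.symm)

def edgesWithin (G : SimpleGraph V) (A : Set V) : Set G.edgeSet :=
  {e | ∀ v ∈ (e : Sym2 V), v ∈ A}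

def crossingEdges (G : SimpleGraph V) (A : Set V) : Set G.edgeSet :=
  {e | (∃ v ∈ (e : Sym2 V), v ∈ A) ∧ ∃ v ∈ (e : Sym2 V), v ∉ A}

def spannedVerts (C : Set G.edgeSet) : Set V :=
  {v | ∃ e ∈ C, v ∈ (e : Sym2 V)}

theorem mem_spannedVerts {C : Set G.edgeSet} {e : G.edgeSet} (he : e ∈ C) {v : V}
    (hv : v ∈ (e : Sym2 V)) : v ∈ spannedVerts C :=
  ⟨e, he, hv⟩

theorem adj_of_mem_edgeSet_of_ne (e : G.edgeSet) {x y : V} (hx : x ∈ (e : Sym2 V))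
    (hy : y ∈ (e : Sym2 V)) (hxy : x ≠ y) : G.Adj x y := by
  simpa [(Sym2.mem_and_mem_iff hxy).mp ⟨hx, hy⟩] using e.2

theorem exists_eq_mk_of_mem_crossingEdges {A : Set V} {e : G.edgeSet}
    (he : e ∈ G.crossingEdges A) : ∃ a ∈ A, ∃ b ∉ A, (e : Sym2 V) = s(a, b) := by
  obtain ⟨⟨a, ha, haA⟩, b, hb, hbA⟩ := he
  exact ⟨a, haA, b, hbA, (Sym2.mem_and_mem_iff (ne_of_mem_of_not_mem haA hbA)).mp ⟨ha, hb⟩⟩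

theorem crossingEdges_compl (A : Set V) : G.crossingEdges Aᶜ = G.crossingEdges A := by
  ext e
  simp only [crossingEdges, Set.mem_ofPred_eq, Set.mem_compl_iff, not_not]
  exact and_comm

theorem cutSize_eq_ncard_crossingEdges (G : SimpleGraph V) (A : Set V) :
    cutSize G A = (G.crossingEdges A).ncard := by
  refine Set.ncard_congr (fun p hp => ⟨s(p.1, p.2), hp.2.2⟩) ?_ ?_ ?_
  · rintro ⟨a, b⟩ ⟨ha, hb, -⟩
    exact ⟨⟨a, Sym2.mem_mk_left a b, ha⟩, b, Sym2.mem_mk_right a b, hb⟩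
  · rintro ⟨a, b⟩ ⟨a', b'⟩ ⟨ha, hb, _⟩ ⟨_, hb', _⟩ h
    rcases Sym2.eq_iff.mp (congrArg Subtype.val h) with ⟨rfl, rfl⟩ | ⟨rfl, -⟩
    · rfl
    · exact absurd ha hb'
  · intro e he
    obtain ⟨a, ha, b, hb, hab⟩ := exists_eq_mk_of_mem_crossingEdges he
    exact ⟨(a, b), ⟨ha, hb, by simpa [hab] using e.2⟩, Subtype.ext hab.symm⟩

theorem mk_mem_edgesWithin {A : Set V} {a b : V} (hab : G.Adj a b) (ha : a ∈ A) (hb : b ∈ A) :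
    (⟨s(a, b), hab⟩ : G.edgeSet) ∈ G.edgesWithin A := by
  rintro v hv
  rcases Sym2.mem_iff.mp hv with rfl | rfl
  exacts [ha, hb]

theorem two_le_ncard_of_mem_edgesWithin [Finite V] {A : Set V} {e : G.edgeSet}
    (he : e ∈ G.edgesWithin A) : 2 ≤ A.ncard := by
  obtain ⟨e, he'⟩ := e
  induction e using Sym2.ind with
  | h x y =>
    exact (Set.one_lt_ncard_iff).mpr ⟨x, y, he x (Sym2.mem_mk_left x y),
      he y (Sym2.mem_mk_right x y), G.ne_of_adj he'⟩

theorem mem_edgesWithin_spannedVerts {C : Set G.edgeSet} {e : G.edgeSet} (he : e ∈ C) :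
    e ∈ G.edgesWithin (spannedVerts C) :=
  fun _ hv => mem_spannedVerts he hv

theorem induce_reachable_of_mem_edgeSet {A : Set V} (e : G.edgeSet) {x y : V}
    (hx : x ∈ (e : Sym2 V)) (hy : y ∈ (e : Sym2 V)) (hxA : x ∈ A) (hyA : y ∈ A) :
    (G.induce A).Reachable ⟨x, hxA⟩ ⟨y, hyA⟩ := by
  obtain rfl | hxy := eq_or_ne x y
  · rfl
  · exact Adj.reachable (adj_of_mem_edgeSet_of_ne e hx hy hxy)

theorem lineGraph_induce_reachable_of_mem {C : Set G.edgeSet} {e f : G.edgeSet} (he : e ∈ C)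
    (hf : f ∈ C) {v : V} (hve : v ∈ (e : Sym2 V)) (hvf : v ∈ (f : Sym2 V)) :
    (G.lineGraph.induce C).Reachable ⟨e, he⟩ ⟨f, hf⟩ := by
  obtain rfl | hef := eq_or_ne e f
  · rfl
  · exact Adj.reachable (lineGraph_adj_iff_exists.mpr ⟨hef, v, hve, hvf⟩)

theorem lineGraph_induce_edgesWithin_reachable_of_walk {A : Set V} {a b : A}
    (p : (G.induce A).Walk a b) {e f : G.edgeSet} (he : e ∈ G.edgesWithin A)
    (hf : f ∈ G.edgesWithin A) (hae : ↑a ∈ (e : Sym2 V)) (hbf : ↑b ∈ (f : Sym2 V)) :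
    (G.lineGraph.induce (G.edgesWithin A)).Reachable ⟨e, he⟩ ⟨f, hf⟩ := by
  induction p generalizing e with
  | nil => exact lineGraph_induce_reachable_of_mem he hf hae hbf
  | @cons a c b hac p ih =>
    have hg := mk_mem_edgesWithin (show G.Adj a c from hac) a.2 c.2
    exact (lineGraph_induce_reachable_of_mem he hg hae (Sym2.mem_mk_left _ _)).trans
      (ih hg (Sym2.mem_mk_right _ _) hbf)

theorem Preconnected.lineGraph_induce_edgesWithin {A : Set V}
    (hA : (G.induce A).Preconnected) : (G.lineGraph.induce (G.edgesWithin A)).Preconnected := by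
  rintro ⟨e, he⟩ ⟨f, hf⟩
  have hx := Sym2.out_fst_mem (e : Sym2 V)
  have hy := Sym2.out_fst_mem (f : Sym2 V)
  obtain ⟨p⟩ := hA ⟨_, he _ hx⟩ ⟨_, hf _ hy⟩
  exact lineGraph_induce_edgesWithin_reachable_of_walk p he hf hx hy

theorem induce_spannedVerts_reachable_of_walk {C : Set G.edgeSet} {e f : C}
    (p : (G.lineGraph.induce C).Walk e f) {x y : V} (hx : x ∈ ((e : G.edgeSet) : Sym2 V))
    (hy : y ∈ ((f : G.edgeSet) : Sym2 V)) :
    (G.induce (spannedVerts C)).Reachable ⟨x, e, e.2, hx⟩ ⟨y, f, f.2, hy⟩ := by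
  induction p generalizing x with
  | nil => exact induce_reachable_of_mem_edgeSet _ hx hy _ _
  | @cons e g f heg p ih =>
    obtain ⟨-, v, hve, hvg⟩ := lineGraph_adj_iff_exists.mp heg
    exact (induce_reachable_of_mem_edgeSet _ hx hve (mem_spannedVerts e.2 hx)
      (mem_spannedVerts e.2 hve)).trans (ih hvg hy)

theorem Preconnected.induce_spannedVerts {C : Set G.edgeSet}
    (hC : (G.lineGraph.induce C).Preconnected) : (G.induce (spannedVerts C)).Preconnected := by
  rintro ⟨x, e, he, hx⟩ ⟨y, f, hf, hy⟩
  obtain ⟨p⟩ := hC ⟨e, he⟩ ⟨f, hf⟩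
  exact induce_spannedVerts_reachable_of_walk p hx hy

theorem exists_mem_edgesWithin_of_mem {A : Set V} (hA : (G.induce A).Preconnected)
    (h2 : 2 ≤ A.ncard) {u : V} (hu : u ∈ A) : ∃ e ∈ G.edgesWithin A, u ∈ (e : Sym2 V) := by
  have : Nontrivial A :=
    Set.nontrivial_coe_sort.mpr (Set.one_lt_ncard_iff_nontrivial_and_finite.mp h2).1
  obtain ⟨⟨w, hw⟩, huw⟩ := hA.exists_adj_of_nontrivial ⟨u, hu⟩
  exact ⟨⟨s(u, w), huw⟩, mk_mem_edgesWithin (show G.Adj u w from huw) hu hw,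
    Sym2.mem_mk_left u w⟩

theorem isFullCompOf_edgesWithin {A : Set V} (hA : (G.induce A).Connected)
    (h2 : 2 ≤ A.ncard) : IsFullCompOf G.lineGraph (G.crossingEdges A) (G.edgesWithin A) := by
  have hstar := fun u (hu : u ∈ A) => exists_mem_edgesWithin_of_mem hA.preconnected h2 hu
  obtain ⟨⟨u, hu⟩⟩ := hA.nonempty
  obtain ⟨e₀, he₀, -⟩ := hstar u hu
  refine ⟨⟨⟨e₀, he₀⟩, ?_, ?_, ?_⟩, ?_⟩
  · exact Set.disjoint_left.mpr fun e he ⟨_, v, hv, hvA⟩ => hvA (he v hv)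
  · exact (connected_iff _).mpr ⟨hA.preconnected.lineGraph_induce_edgesWithin, ⟨⟨e₀, he₀⟩⟩⟩
  · intro e he g heg hg v hv
    by_contra hvA
    obtain ⟨-, w, hwe, hwg⟩ := lineGraph_adj_iff_exists.mp heg
    exact hg ⟨⟨w, hwg, he w hwe⟩, v, hv, hvA⟩
  · ext g
    constructor
    · rintro ⟨hgA, e, he, heg⟩
      obtain ⟨-, w, hwe, hwg⟩ := lineGraph_adj_iff_exists.mp heg
      simp only [edgesWithin, Set.mem_ofPred_eq, not_forall] at hgA
      obtain ⟨v, hvg, hvA⟩ := hgA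
      exact ⟨⟨w, hwg, he w hwe⟩, v, hvg, hvA⟩
    · rintro ⟨⟨a, hag, ha⟩, b, hbg, hb⟩
      obtain ⟨e, he, hae⟩ := hstar a ha
      have hgA : g ∉ G.edgesWithin A := fun hgA => hb (hgA b hbg)
      exact ⟨hgA, e, he, lineGraph_adj_iff_exists.mpr ⟨fun heg => hgA (heg ▸ he), a, hae, hag⟩⟩

theorem isMinSep_crossingEdges {A : Set V} (hA : IsConnCut G A) (h2 : 2 ≤ A.ncard)
    (h2c : 2 ≤ Aᶜ.ncard) : IsMinSep G.lineGraph (G.crossingEdges A) := by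
  have h₁ := isFullCompOf_edgesWithin hA.1 h2
  have h₂ := isFullCompOf_edgesWithin hA.2 h2c
  rw [crossingEdges_compl] at h₂
  refine ⟨_, _, fun h => ?_, h₁, h₂⟩
  obtain ⟨e, he⟩ := h₁.1.1
  exact (h ▸ he : e ∈ G.edgesWithin Aᶜ) _ (Sym2.out_fst_mem _) (he _ (Sym2.out_fst_mem _))

theorem exists_mem_spannedVerts_of_mem_nbhd {C : Set G.edgeSet} {e : G.edgeSet}
    (he : e ∈ nbhd G.lineGraph C) : ∃ v ∈ (e : Sym2 V), v ∈ spannedVerts C := by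
  obtain ⟨-, f, hf, hfe⟩ := he
  obtain ⟨-, v, hvf, hve⟩ := lineGraph_adj_iff_exists.mp hfe
  exact ⟨v, hve, mem_spannedVerts hf hvf⟩

section MinimalSeparator

variable {S C₁ C₂ : Set G.edgeSet}

theorem disjoint_spannedVerts (h₁ : IsCompOf G.lineGraph S C₁) (h₂ : IsCompOf G.lineGraph S C₂)
    (hne : C₁ ≠ C₂) : Disjoint (spannedVerts C₁) (spannedVerts C₂) := by
  have hdisj := h₁.disjoint_of_ne h₂ hne
  obtain ⟨-, -, -, hC₁closed⟩ := h₁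
  obtain ⟨-, hC₂S, -, -⟩ := h₂
  refine Set.disjoint_left.mpr ?_
  rintro v ⟨e, he, hve⟩ ⟨f, hf, hvf⟩
  have hef : e ≠ f := fun h => Set.disjoint_left.mp hdisj he (h ▸ hf)
  have hfS : f ∉ S := Set.disjoint_left.mp hC₂S hf
  exact Set.disjoint_left.mp hdisj
    (hC₁closed e he f (lineGraph_adj_iff_exists.mpr ⟨hef, v, hve, hvf⟩) hfS) hf

variable (h₁ : IsFullCompOf G.lineGraph S C₁) (h₂ : IsFullCompOf G.lineGraph S C₂)
  (hne : C₁ ≠ C₂)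
include h₁ h₂ hne

theorem subset_crossingEdges_spannedVerts : S ⊆ G.crossingEdges (spannedVerts C₁) := by
  intro e he
  obtain ⟨a, hae, ha⟩ := exists_mem_spannedVerts_of_mem_nbhd (h₁.2 ▸ he)
  obtain ⟨b, hbe, hb⟩ := exists_mem_spannedVerts_of_mem_nbhd (h₂.2 ▸ he)
  exact ⟨⟨a, hae, ha⟩, b, hbe, Set.disjoint_right.mp (disjoint_spannedVerts h₁.1 h₂.1 hne) hb⟩

theorem mem_spannedVerts_of_adj {x y : V} (hxy : G.Adj x y) (hx : x ∉ spannedVerts C₁)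
    (hy : y ∈ spannedVerts C₁) : x ∈ spannedVerts C₂ := by
  obtain ⟨e, he, hye⟩ := hy
  let g : G.edgeSet := ⟨s(x, y), hxy⟩
  have hgC : g ∉ C₁ := fun hg => hx (mem_spannedVerts hg (Sym2.mem_mk_left x y))
  have hgS : g ∈ S := by
    by_contra hgS
    refine hgC (h₁.1.2.2.2 e he g ?_ hgS)
    exact lineGraph_adj_iff_exists.mpr ⟨fun h => hgC (h ▸ he), y, hye, Sym2.mem_mk_right x y⟩
  obtain ⟨v, hvg, hv⟩ := exists_mem_spannedVerts_of_mem_nbhd (h₂.2 ▸ hgS)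
  rcases Sym2.mem_iff.mp hvg with rfl | rfl
  · exact hv
  · exact absurd hv (Set.disjoint_left.mp (disjoint_spannedVerts h₁.1 h₂.1 hne) ⟨e, he, hye⟩)

end MinimalSeparator

theorem exists_isConnCut_of_isMinSep [Finite V] (hG : G.Connected) {S : Set G.edgeSet}
    (hS : IsMinSep G.lineGraph S) :
    ∃ A : Set V, IsConnCut G A ∧ 2 ≤ A.ncard ∧ 2 ≤ Aᶜ.ncard ∧ S.ncard ≤ cutSize G A := by
  obtain ⟨C₁, C₂, hne, h₁, h₂⟩ := hS
  have hBA : spannedVerts C₂ ⊆ (spannedVerts C₁)ᶜ :=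
    (disjoint_spannedVerts h₁.1 h₂.1 hne).subset_compl_left
  obtain ⟨e₁, he₁⟩ := h₁.1.1
  obtain ⟨e₂, he₂⟩ := h₂.1.1
  have hv₁ := mem_spannedVerts he₁ (Sym2.out_fst_mem _)
  have hv₂ := mem_spannedVerts he₂ (Sym2.out_fst_mem _)
  refine ⟨spannedVerts C₁, ⟨?_, ?_⟩, two_le_ncard_of_mem_edgesWithin
    (mem_edgesWithin_spannedVerts he₁), (two_le_ncard_of_mem_edgesWithin
    (mem_edgesWithin_spannedVerts he₂)).trans (Set.ncard_le_ncard hBA), ?_⟩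
  · exact (connected_iff _).mpr ⟨h₁.1.2.2.1.preconnected.induce_spannedVerts, ⟨⟨_, hv₁⟩⟩⟩
  · refine (connected_iff _).mpr ⟨?_, ⟨⟨_, hBA hv₂⟩⟩⟩
    exact preconnected_induce_compl hG.preconnected hBA ⟨_, hv₁⟩
      (fun _ _ hxy hx hy => mem_spannedVerts_of_adj h₁ h₂ hne hxy hx hy)
      h₂.1.2.2.1.preconnected.induce_spannedVerts
  · rw [cutSize_eq_ncard_crossingEdges]
    exact Set.ncard_le_ncard (subset_crossingEdges_spannedVerts h₁ h₂ hne)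

end SimpleGraph

/-- Let `G` be a connected graph and `G'` its line graph. Then `G` has a non-trivial
connected cut (both sides of size at least two) with at least `k` cut edges if and
only if `G'` has a minimal separator of size at least `k`. -/
theorem stmt6 {V : Type u} [Fintype V] (G : SimpleGraph V) (hconn : G.Connected) (k : ℕ) :
    (∃ S : Set V, IsConnCut G S ∧ 2 ≤ S.ncard ∧ 2 ≤ Sᶜ.ncard ∧ k ≤ cutSize G S) ↔
    (∃ S : Set G.edgeSet, IsMinSep G.lineGraph S ∧ k ≤ S.ncard) := by
  constructor
  · rintro ⟨S, hS, h2, h2c, hk⟩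
    exact ⟨_, isMinSep_crossingEdges hS h2 h2c, cutSize_eq_ncard_crossingEdges G S ▸ hk⟩
  · rintro ⟨S, hS, hk⟩
    obtain ⟨A, hA, h2, h2c, hle⟩ := exists_isConnCut_of_isMinSep hconn hS
    exact ⟨A, hA, h2, h2c, hk.trans hle⟩
end

section
/- Let G be a graph with a tree decomposition in which a bag B equals a minimal separator S of G, and for each component C_i of G − S let T_i be a tree decomposition of G(C_i, S) (the graph G[C_i ∪ S] with S completed into a clique) of width at most w, where |S| ≤ w + 1. Then connecting, for each i, a bag of T_i containing S to the new bag B = S yields a tree decomposition of G of width at most w. -/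
open SimpleGraph

universe u

/-- The graph `G(C, S)`: the induced subgraph `G[C ∪ S]` with `S` completed into a clique. -/
def GCS {V : Type u} (G : SimpleGraph V) (C S : Set V) : SimpleGraph ↥(C ∪ S) where
  Adj x y := G.Adj x y ∨ ((x : V) ∈ S ∧ (y : V) ∈ S ∧ x ≠ y)
  symm := by
    constructor
    rintro x y (h | ⟨h1, h2, h3⟩)
    · exact Or.inl h.symm
    · exact Or.inr ⟨h2, h1, h3.symm⟩
  loopless := by
    constructor
    rintro x (h | ⟨_, _, h⟩)
    · exact G.irrefl h
    · exact h rfl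

/-- A tree decomposition of `G`: a tree `T` with a bag `X_t ⊆ V` for each node `t`
such that every vertex lies in some bag, every edge is contained in some bag, and
for each vertex `v` the nodes whose bag contains `v` form a subtree of `T`
(phrased via: every path between two nodes whose bags contain `v` stays in bags
containing `v`). -/
structure TreeDecomp {V : Type u} (G : SimpleGraph V) : Type (u + 1) where
  ι : Type u
  T : SimpleGraph ι
  tree : T.IsTree
  bag : ι → Set V
  cover_vertex : ∀ v : V, ∃ t, v ∈ bag t
  cover_edge : ∀ u v : V, G.Adj u v → ∃ t, u ∈ bag t ∧ v ∈ bag t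
  bag_connected : ∀ (v : V) (t₁ t₂ : ι), v ∈ bag t₁ → v ∈ bag t₂ →
    ∀ (p : T.Walk t₁ t₂), p.IsPath → ∀ t ∈ p.support, v ∈ bag t

/-!
Join a new node with bag `S` to a bag `r C ⊇ S` of each decomposition `T_C`; such a bag exists
because `S` is a clique of `G(C, S)`, and the result is again a tree. A vertex or edge not inside
`S` lies in `G(C, S)` for the component `C` it meets, so it is covered by `T_C`. For the subtree
property of a vertex `v`: if `v ∈ S`, its subtree in each `T_C` contains `r C` and all of them are
linked through the new node; if `v ∉ S`, all nodes containing `v` lie in the single `T_C` of its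
component, because distinct components meet only in `S`.
-/

namespace SimpleGraph

section Subtrees

variable {ι : Type*} {T : SimpleGraph ι} {X : Set ι}

theorem Reachable.mem_of_forall_adj_mem (hX : ∀ ⦃a b⦄, T.Adj a b → a ∈ X → b ∈ X) {u v : ι}
    (h : T.Reachable u v) (hu : u ∈ X) : v ∈ X := by
  obtain ⟨p⟩ := h
  induction p with
  | nil => exact hu
  | cons hadj _ ih => exact ih (hX hadj hu)

theorem IsTree.mem_of_mem_support_of_preconnected (hT : T.IsTree)
    (hX : (T.induce X).Preconnected) {a b : ι} (ha : a ∈ X) (hb : b ∈ X) {p : T.Walk a b}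
    (hp : p.IsPath) {t : ι} (ht : t ∈ p.support) : t ∈ X := by
  classical
  obtain ⟨q⟩ := hX ⟨a, ha⟩ ⟨b, hb⟩
  set q' : T.Walk a b := q.map (Embedding.induce X).toHom
  have hpq : p = q'.toPath := (hT.existsUnique_path a b).unique hp q'.toPath.2
  have ht' : t ∈ q'.support := q'.support_toPath_subset_support (hpq ▸ ht)
  obtain ⟨x, -, rfl⟩ := List.mem_map.mp (q.support_map _ ▸ ht')
  exact x.2

theorem preconnected_induce_of_forall_isPath (hT : T.Preconnected)
    (hX : ∀ a ∈ X, ∀ b ∈ X, ∀ p : T.Walk a b, p.IsPath → ∀ t ∈ p.support, t ∈ X) :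
    (T.induce X).Preconnected := by
  classical
  rintro ⟨a, ha⟩ ⟨b, hb⟩
  obtain ⟨p⟩ := hT a b
  exact (p.toPath.1.induce X (hX a ha b hb _ p.toPath.2)).reachable

theorem IsTree.exists_gate (hT : T.IsTree) (hX : (T.induce X).Preconnected) {x : ι}
    (hx : x ∈ X) (a : ι) : ∃ g ∈ X, ∀ s ∈ X, ∀ p : T.Walk s a, p.IsPath → g ∈ p.support := by
  classical
  obtain ⟨w⟩ := hT.connected.preconnected a x
  induction w with
  | nil => exact ⟨_, hx, fun s _ p _ => p.end_mem_support⟩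
  | @cons a a' x hadj w ih =>
    by_cases ha : a ∈ X
    · exact ⟨a, ha, fun s _ p _ => p.end_mem_support⟩
    obtain ⟨g, hg, hgate⟩ := ih hx
    refine ⟨g, hg, fun s hs p hp => ?_⟩
    obtain ⟨p', hp'⟩ := (hT.connected.preconnected s a').some.toPath
    have hgp' := hgate s hs p' hp'
    by_cases haa : a ∈ p'.support
    · rw [hT.isAcyclic.path_concat hp hp' hadj haa, Walk.support_concat,
        List.mem_append, List.mem_singleton] at hgp'
      refine hgp'.resolve_right fun hga => ha ?_
      exact hT.mem_of_mem_support_of_preconnected hX hs (hga ▸ hg) hp' haa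
    · have ha' := hT.isAcyclic.mem_support_of_ne_mem_support_of_adj_of_isPath hp hp' hadj haa
      rw [hT.isAcyclic.path_concat hp' hp hadj.symm ha']
      exact p'.support_subset_support_concat _ hgp'

end Subtrees

section GlueAtRoots

variable {K : Type*} {F : K → Type*} {T : ∀ k, SimpleGraph (F k)} {r : ∀ k, F k}

/-- `none` is the new node, joined to the root `r k` of each `T k`. -/
def glueAtRoots (T : ∀ k, SimpleGraph (F k)) (r : ∀ k, F k) :
    SimpleGraph (Option (Σ k, F k)) where
  Adj x y := (x = none ∧ ∃ k, y = some ⟨k, r k⟩) ∨ (y = none ∧ ∃ k, x = some ⟨k, r k⟩) ∨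
    ∃ k s s', (T k).Adj s s' ∧ x = some ⟨k, s⟩ ∧ y = some ⟨k, s'⟩
  symm := by
    constructor
    rintro x y (⟨rfl, k, rfl⟩ | ⟨rfl, k, rfl⟩ | ⟨k, s, s', hA, rfl, rfl⟩)
    · exact Or.inr (Or.inl ⟨rfl, k, rfl⟩)
    · exact Or.inl ⟨rfl, k, rfl⟩
    · exact Or.inr (Or.inr ⟨k, s', s, hA.symm, rfl, rfl⟩)
  loopless := by
    constructor
    rintro x (⟨rfl, k, h⟩ | ⟨rfl, k, h⟩ | ⟨k, s, s', hA, rfl, he⟩)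
    · cases h
    · cases h
    · exact hA.ne (sigma_mk_injective (Option.some.inj he))

theorem glueAtRoots_adj_root (k : K) : (glueAtRoots T r).Adj none (some ⟨k, r k⟩) :=
  Or.inl ⟨rfl, k, rfl⟩

def glueAtRoots.incl (k : K) : T k →g glueAtRoots T r where
  toFun s := some ⟨k, s⟩
  map_rel' h := Or.inr (Or.inr ⟨k, _, _, h, rfl, rfl⟩)

theorem glueAtRoots.incl_injective (k : K) :
    Function.Injective (glueAtRoots.incl (T := T) (r := r) k) :=
  fun _ _ h => sigma_mk_injective (Option.some.inj h)

theorem glueAtRoots.exists_root_eq_of_adj_none {y : Option (Σ k, F k)}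
    (h : (glueAtRoots T r).Adj none y) : ∃ k, y = some ⟨k, r k⟩ := by
  rcases h with ⟨-, h⟩ | ⟨-, k, h⟩ | ⟨k, s, s', -, h, -⟩
  · exact h
  · cases h
  · cases h

theorem glueAtRoots.exists_eq_map_of_none_notMem {x y : Option (Σ k, F k)}
    (W : (glueAtRoots T r).Walk x y) (hW : none ∉ W.support) {k : K} {s : F k}
    (hx : x = incl k s) : ∃ (s' : F k) (w : (T k).Walk s s') (hy : y = incl k s'),
      W = (w.map (incl k)).copy hx.symm hy.symm := by
  induction W generalizing s with
  | nil => subst hx; exact ⟨s, .nil, rfl, rfl⟩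
  | @cons x z y h W ih =>
    subst hx
    have hz : z ≠ none := fun hz => hW (hz ▸ List.mem_cons_of_mem _ W.start_mem_support)
    rcases h with ⟨h, -⟩ | ⟨rfl, -⟩ | ⟨k', s₁, s₂, hA, e, rfl⟩
    · cases h
    · exact absurd rfl hz
    · obtain ⟨rfl, e⟩ := Sigma.mk.inj_iff.mp (Option.some.inj e)
      obtain rfl := eq_of_heq e
      obtain ⟨s', w, rfl, rfl⟩ := ih (fun h => hW (List.mem_cons_of_mem _ h)) rfl
      exact ⟨s', .cons hA w, rfl, rfl⟩

theorem glueAtRoots_isAcyclic (hT : ∀ k, (T k).IsAcyclic) : (glueAtRoots T r).IsAcyclic := by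
  intro x c hc
  by_cases hnone : none ∈ c.support
  · -- a cycle through `none` leaves it towards `r k` and returns from `r k'`; the part in
    -- between avoids `none`, so `k = k'` and that part is a path from `r k` to itself
    classical
    have hc' := hc.rotate hnone
    generalize c.rotate none hnone = c' at hc'
    cases c' with
    | nil => exact hc'.ne_nil rfl
    | cons h p =>
      have hp := ((Walk.cons_isCycle_iff p h).mp hc').1
      obtain ⟨k, rfl⟩ := glueAtRoots.exists_root_eq_of_adj_none h
      obtain ⟨z, h', q, hpq⟩ := Walk.exists_eq_cons_of_ne (by simp) p.reverse
      have hq := (Walk.cons_isPath_iff h' q).mp (hpq ▸ hp.reverse)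
      obtain ⟨k', rfl⟩ := glueAtRoots.exists_root_eq_of_adj_none h'
      obtain ⟨s', w, hy, -⟩ := glueAtRoots.exists_eq_map_of_none_notMem q hq.2 rfl
      obtain ⟨rfl, -⟩ := Sigma.mk.inj_iff.mp (Option.some.inj hy)
      have hlen : p.length = 1 := by
        rw [← Walk.length_reverse, hpq, Walk.length_cons,
          (Walk.isPath_iff_nil.mp hq.1).length_eq_zero]
      have := hc'.three_le_length
      rw [Walk.length_cons, hlen] at this
      omega
  · rcases x with _ | ⟨k, s⟩
    · exact hnone c.start_mem_support
    obtain ⟨s', w, hs, rfl⟩ := glueAtRoots.exists_eq_map_of_none_notMem c hnone rfl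
    obtain rfl := glueAtRoots.incl_injective k hs
    exact hT k w <| (Walk.isCycle_map_iff_of_injective (glueAtRoots.incl_injective k)).mp
      ((Walk.isCycle_copy _ _).mp hc)

theorem glueAtRoots_connected (hT : ∀ k, (T k).Connected) : (glueAtRoots T r).Connected := by
  refine (connected_iff_exists_forall_reachable _).mpr ⟨none, ?_⟩
  rintro (_ | ⟨k, s⟩)
  · rfl
  · exact (glueAtRoots_adj_root k).reachable.trans
      (((hT k).preconnected (r k) s).map (glueAtRoots.incl k))

theorem glueAtRoots_isTree (hT : ∀ k, (T k).IsTree) : (glueAtRoots T r).IsTree :=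
  ⟨glueAtRoots_connected fun k => (hT k).connected,
    glueAtRoots_isAcyclic fun k => (hT k).isAcyclic⟩

def glueAtRootsBag {V : Type*} (B : Set V) (β : ∀ k, F k → Set V) :
    Option (Σ k, F k) → Set V
  | none => B
  | some ⟨k, t⟩ => β k t

theorem glueAtRoots_preconnected_induce_bag {V : Type*} {B : Set V} {β : ∀ k, F k → Set V}
    (hβ : ∀ k v, ((T k).induce {t | v ∈ β k t}).Preconnected)
    (hroot : ∀ k t, B ∩ β k t ⊆ β k (r k))
    (hsep : ∀ k k', k ≠ k' → ∀ t t', β k t ∩ β k' t' ⊆ B) (v : V) :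
    ((glueAtRoots T r).induce {x | v ∈ glueAtRootsBag B β x}).Preconnected := by
  set X := {x | v ∈ glueAtRootsBag B β x}
  have hcopy : ∀ k {s t} (hs : v ∈ β k s) (ht : v ∈ β k t),
      ((glueAtRoots T r).induce X).Reachable ⟨some ⟨k, s⟩, hs⟩ ⟨some ⟨k, t⟩, ht⟩ :=
    fun k s t hs ht => (hβ k v ⟨s, hs⟩ ⟨t, ht⟩).map
      (induceHom (glueAtRoots.incl k) (t := X) fun _ h => h)
  by_cases hv : v ∈ B
  · have hnone : ∀ x : X, ((glueAtRoots T r).induce X).Reachable ⟨none, hv⟩ x := by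
      rintro ⟨_ | ⟨k, t⟩, hx⟩
      · rfl
      · have hadj : ((glueAtRoots T r).induce X).Adj ⟨none, hv⟩
            ⟨some ⟨k, r k⟩, hroot k t ⟨hv, hx⟩⟩ := glueAtRoots_adj_root k
        exact hadj.reachable.trans (hcopy k _ hx)
    exact fun x y => (hnone x).symm.trans (hnone y)
  · rintro ⟨_ | ⟨k, s⟩, hx⟩ ⟨_ | ⟨k', t⟩, hy⟩
    · exact absurd hx hv
    · exact absurd hx hv
    · exact absurd hy hv
    obtain rfl : k = k' := by_contra fun hk => hv (hsep k k' hk s t ⟨hx, hy⟩)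
    exact hcopy k hx hy

end GlueAtRoots

end SimpleGraph

namespace TreeDecomp

variable {V : Type u} {H : SimpleGraph V} (td : TreeDecomp H)

theorem preconnected_induce_bag (v : V) : (td.T.induce {t | v ∈ td.bag t}).Preconnected :=
  preconnected_induce_of_forall_isPath td.tree.connected.preconnected
    fun a ha b hb p hp => td.bag_connected v a b ha hb p hp

theorem exists_subset_bag_of_isClique {K : Set V} (hK : K.Finite) (hclique : H.IsClique K) :
    ∃ t, K ⊆ td.bag t := by
  classical
  induction K, hK using Set.Finite.induction_on with
  | empty => exact ⟨td.tree.connected.nonempty.some, Set.empty_subset _⟩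
  | @insert v K hvK _ ih =>
    obtain ⟨t₁, ht₁⟩ := ih (hclique.subset (Set.subset_insert v K))
    obtain ⟨t₂, ht₂⟩ := td.cover_vertex v
    obtain ⟨g, hg, hgate⟩ := td.tree.exists_gate (td.preconnected_induce_bag v) ht₂ t₁
    refine ⟨g, Set.insert_subset hg fun u hu => ?_⟩
    obtain ⟨s, hus, hvs⟩ := td.cover_edge u v
      (hclique (Set.mem_insert_of_mem v hu) (Set.mem_insert v K) (ne_of_mem_of_not_mem hu hvK))
    obtain ⟨p, hp⟩ := (td.tree.connected.preconnected s t₁).some.toPath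
    exact td.bag_connected u s t₁ hus (ht₁ hu) p hp g (hgate s hvs p hp)

theorem preconnected_induce_image_bag {W : Set V} {H : SimpleGraph W} (td : TreeDecomp H)
    (v : V) : (td.T.induce {t | v ∈ Subtype.val '' td.bag t}).Preconnected := by
  rintro ⟨a, x, hxa, rfl⟩ ⟨b, y, hyb, hy⟩
  have hx : {t | x ∈ td.bag t} ⊆ {t | (x : V) ∈ Subtype.val '' td.bag t} :=
    fun _ => Set.mem_image_of_mem Subtype.val
  exact (td.preconnected_induce_bag x ⟨a, hxa⟩ ⟨b, Subtype.ext hy ▸ hyb⟩).map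
    (induceHomOfLE td.T hx).toHom

end TreeDecomp

section Components

variable {V : Type u} {G : SimpleGraph V} {S C C' : Set V}

theorem isCompOf_image_supp (c : (G.induce Sᶜ).ConnectedComponent) :
    IsCompOf G S (Subtype.val '' c.supp) := by
  refine ⟨c.nonempty_supp.image _, Set.disjoint_left.mpr ?_, ?_, ?_⟩
  · rintro _ ⟨u, -, rfl⟩
    exact u.2
  · refine c.connected_toSimpleGraph.map ⟨fun x => ⟨x.1.1, x.1, x.2, rfl⟩, id⟩ ?_
    rintro ⟨_, u, hu, rfl⟩
    exact ⟨⟨u, hu⟩, rfl⟩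
  · rintro _ ⟨u, hu, rfl⟩ v hadj hv
    exact ⟨⟨v, hv⟩, c.mem_supp_of_adj_mem_supp hu hadj, rfl⟩

theorem exists_isCompOf_mem {v : V} (hv : v ∉ S) : ∃ C, IsCompOf G S C ∧ v ∈ C :=
  ⟨_, isCompOf_image_supp ((G.induce Sᶜ).connectedComponentMk ⟨v, hv⟩), ⟨v, hv⟩, rfl, rfl⟩

theorem IsCompOf.subset_of_mem_s19 (hC : IsCompOf G S C) (hC' : IsCompOf G S C') {z : V}
    (hz : z ∈ C) (hz' : z ∈ C') : C ⊆ C' := fun u hu =>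
  (hC.2.2.1.preconnected ⟨z, hz⟩ ⟨u, hu⟩).mem_of_forall_adj_mem (X := {x : C | (x : V) ∈ C'})
    (fun a b hab ha => hC'.2.2.2 a ha b hab (Set.disjoint_left.mp hC.2.1 b.2)) hz'

theorem IsCompOf.eq_of_mem_s19 (hC : IsCompOf G S C) (hC' : IsCompOf G S C') {z : V}
    (hz : z ∈ C) (hz' : z ∈ C') : C = C' :=
  (hC.subset_of_mem_s19 hC' hz hz').antisymm (hC'.subset_of_mem_s19 hC hz' hz)

end Components

section Gluing

variable {V : Type u} {G : SimpleGraph V} {S : Set V}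
  (td : ∀ C : {C // IsCompOf G S C}, TreeDecomp (GCS G C S))

def compBag (C : {C // IsCompOf G S C}) (t : (td C).ι) : Set V :=
  Subtype.val '' (td C).bag t

theorem exists_compBag_of_notMem {v : V} (hv : v ∉ S) : ∃ C t, v ∈ compBag td C t := by
  obtain ⟨C, hC, hvC⟩ := exists_isCompOf_mem hv
  obtain ⟨t, ht⟩ := (td ⟨C, hC⟩).cover_vertex ⟨v, Or.inl hvC⟩
  exact ⟨⟨C, hC⟩, t, _, ht, rfl⟩

theorem exists_compBag_of_adj {u v : V} (hu : u ∉ S) (huv : G.Adj u v) :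
    ∃ C t, u ∈ compBag td C t ∧ v ∈ compBag td C t := by
  obtain ⟨C, hC, huC⟩ := exists_isCompOf_mem hu
  have hv : v ∈ C ∪ S := (em (v ∈ S)).elim Or.inr fun hv => Or.inl (hC.2.2.2 u huC v huv hv)
  obtain ⟨t, hut, hvt⟩ := (td ⟨C, hC⟩).cover_edge ⟨u, Or.inl huC⟩ ⟨v, hv⟩ (Or.inl huv)
  exact ⟨⟨C, hC⟩, t, ⟨_, hut, rfl⟩, _, hvt, rfl⟩

theorem compBag_inter_subset {C C' : {C // IsCompOf G S C}} (hCC' : C ≠ C') (t : (td C).ι)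
    (t' : (td C').ι) : compBag td C t ∩ compBag td C' t' ⊆ S := by
  rintro v ⟨⟨x, -, rfl⟩, y, -, hy⟩
  by_contra hv
  exact hCC' (Subtype.ext (C.2.eq_of_mem_s19 C'.2 (x.2.resolve_right hv)
    (hy ▸ y.2.resolve_right (hy ▸ hv))))

variable (r : ∀ C, (td C).ι) (hr : ∀ C, {x : ↥(C.1 ∪ S) | (x : V) ∈ S} ⊆ (td C).bag (r C))

def glueTreeDecomp : TreeDecomp G where
  ι := Option (Σ C, (td C).ι)
  T := glueAtRoots (fun C => (td C).T) r
  tree := glueAtRoots_isTree fun C => (td C).tree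
  bag := glueAtRootsBag S (compBag td)
  cover_vertex v := by
    by_cases hv : v ∈ S
    · exact ⟨none, hv⟩
    · obtain ⟨C, t, ht⟩ := exists_compBag_of_notMem td hv
      exact ⟨some ⟨C, t⟩, ht⟩
  cover_edge u v huv := by
    by_cases hu : u ∈ S
    · by_cases hv : v ∈ S
      · exact ⟨none, hu, hv⟩
      · obtain ⟨C, t, hvt, hut⟩ := exists_compBag_of_adj td hv huv.symm
        exact ⟨some ⟨C, t⟩, hut, hvt⟩
    · obtain ⟨C, t, hut, hvt⟩ := exists_compBag_of_adj td hu huv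
      exact ⟨some ⟨C, t⟩, hut, hvt⟩
  bag_connected v _ _ h₁ h₂ _ hp _ ht :=
    (glueAtRoots_isTree fun C => (td C).tree).mem_of_mem_support_of_preconnected
      (glueAtRoots_preconnected_induce_bag
        (fun C => (td C).preconnected_induce_image_bag)
        (fun C _ _ ⟨hv, x, _, hx⟩ => ⟨x, hr C (hx ▸ hv : (x : V) ∈ S), hx⟩)
        (fun _ _ hCC' => compBag_inter_subset td hCC') v) h₁ h₂ hp ht

end Gluing

theorem stmt19_general {V : Type u} [Fintype V] (G : SimpleGraph V) (S : Set V) (w : ℕ)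
    (hSsize : S.ncard ≤ w + 1)
    (htd : ∀ C : Set V, IsCompOf G S C →
      ∃ td : TreeDecomp (GCS G C S), ∀ t, (td.bag t).ncard ≤ w + 1) :
    ∃ td : TreeDecomp G, ∀ t, (td.bag t).ncard ≤ w + 1 := by
  choose td hw using fun C : {C // IsCompOf G S C} => htd C.1 C.2
  choose r hr using fun C => (td C).exists_subset_bag_of_isClique
    (Set.toFinite {x : ↥(C.1 ∪ S) | (x : V) ∈ S}) fun x hx y hy hxy => Or.inr ⟨hx, hy, hxy⟩
  refine ⟨glueTreeDecomp td r hr, ?_⟩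
  rintro (_ | ⟨C, t⟩)
  · exact hSsize
  · exact (Set.ncard_image_of_injective _ Subtype.val_injective).trans_le (hw C t)

/-- Let `S` be a minimal separator of `G` with `|S| ≤ w + 1`, and suppose that for
each component `C` of `G − S` the graph `G(C, S)` (i.e. `G[C ∪ S]` with `S` completed
into a clique) has a tree decomposition of width at most `w`. Then (gluing a bag of
each such decomposition containing `S` to a new bag `B = S`) `G` has a tree
decomposition of width at most `w`. -/
theorem stmt19 {V : Type u} [Fintype V] (G : SimpleGraph V) (S : Set V) (w : ℕ)
    (hS : IsMinSep G S) (hSsize : S.ncard ≤ w + 1)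
    (htd : ∀ C : Set V, IsCompOf G S C →
      ∃ td : TreeDecomp (GCS G C S), ∀ t, (td.bag t).ncard ≤ w + 1) :
    ∃ td : TreeDecomp G, ∀ t, (td.bag t).ncard ≤ w + 1 :=
  stmt19_general G S w hSsize htd
end
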